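/- arXiv:2403.03703 — 4 statements merged into one kernel-verified Lean document; each statement's English description precedes it below -/
import Mathlib

section
/- Let n ≥ 1, let S be a subset of E^n (with the induced order), and let A = {a_1,…,a_k} be a subset of S. Then the local Dedekind number of S decomposes as D(S) = Σ_{f ∈ M(A)} D(S \ S_{A,f}), where the sum ranges over all monotone functions f : A → Bool (A carrying the order induced from E^n). -/
/-- The `n`-dimensional cube `E^n = {0,1}^n`, realized as functions `Fin n → Bool`
with the pointwise order (`false < true`). -/
abbrev Cube (n : ℕ) := Fin n → Bool

/-- The weight of a point: the number of coordinates equal to `true`. -/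
def weight {n : ℕ} (a : Cube n) : ℕ :=
  (Finset.univ.filter fun i => a i = true).card

/-- `covers a b` means `b` covers `a`: `a ≤ b` and `|b| = |a| + 1`. -/
def covers {n : ℕ} (a b : Cube n) : Prop :=
  a ≤ b ∧ weight b = weight a + 1

/-- The upper set `S_{a,1} = {b : a ≤ b}`. -/
def upSet {n : ℕ} (a : Cube n) : Set (Cube n) := {b | a ≤ b}

/-- The lower set `S_{a,0} = {b : b ≤ a}`. -/
def downSet {n : ℕ} (a : Cube n) : Set (Cube n) := {b | b ≤ a}

/-- The subset `S_{A,f} = ⋃_{a ∈ A} S_{a, f(a)}` generated by `A` and `f : A → Bool`. -/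
def genSet {n : ℕ} (A : Set (Cube n)) (f : A → Bool) : Set (Cube n) :=
  ⋃ a : A, if f a = true then upSet a.1 else downSet a.1

/-- The local Dedekind number `D(S)`: the number of monotone functions `S → Bool`,
where `S` carries the order induced from `E^n`. -/
noncomputable def localDedekind {n : ℕ} (S : Set (Cube n)) : ℕ :=
  Nat.card {f : S → Bool // Monotone f}

/-- The `n`-th Dedekind number `D_n = D(E^n)`. -/
noncomputable def dedekind (n : ℕ) : ℕ := localDedekind (Set.univ : Set (Cube n))

/-- A set `T` is a `V₃`: a three-element subset `{v, a, b}` with `a ≠ b` such that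
either `v ⋖ a` and `v ⋖ b`, or `a ⋖ v` and `b ⋖ v`. -/
def isV3 {n : ℕ} (T : Set (Cube n)) : Prop :=
  ∃ v a b : Cube n, a ≠ b ∧ T = {v, a, b} ∧
    ((covers v a ∧ covers v b) ∨ (covers a v ∧ covers b v))

/-- `A` completely partitions `S`: for every monotone `f : A → Bool`, the number
`D(S \ S_{A,f})` is a product of Dedekind numbers. -/
def completelyPartitions {n : ℕ} (A S : Set (Cube n)) : Prop :=
  ∀ f : A → Bool, Monotone f →
    ∃ l : List ℕ, localDedekind (S \ genSet A f) = (l.map dedekind).prod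

lemma mem_genSet_iff {n : ℕ} {A : Set (Cube n)} {f : A → Bool} {x : Cube n} :
    x ∈ genSet A f ↔ (∃ a : A, f a = true ∧ (a : Cube n) ≤ x) ∨
      (∃ a : A, f a = false ∧ x ≤ (a : Cube n)) := by
  simp only [genSet, Set.mem_iUnion]
  constructor
  · rintro ⟨a, ha⟩
    by_cases h : f a = true
    · left; exact ⟨a, h, by simpa [h, upSet] using ha⟩
    · right; exact ⟨a, by simpa using h, by simpa [h, downSet] using ha⟩
  · rintro (⟨a, ha, hle⟩ | ⟨a, ha, hle⟩)
    · exact ⟨a, by simp [ha, upSet, hle]⟩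
    · exact ⟨a, by simp [ha, downSet, hle, Bool.eq_false_iff]⟩

open Classical in
/-- Extension of `h : S \ genSet A f → Bool` to `S`, forced on `genSet A f`. -/
noncomputable def extFun {n : ℕ} (S A : Set (Cube n)) (f : A → Bool)
    (h : ↥(S \ genSet A f) → Bool) : S → Bool :=
  fun x => if (∃ a : A, f a = true ∧ (a : Cube n) ≤ x.1) then true
    else if hx : x.1 ∈ genSet A f then false else h ⟨x.1, x.2, hx⟩

lemma extFun_monotone {n : ℕ} (S A : Set (Cube n)) (f : A → Bool)
    (h : ↥(S \ genSet A f) → Bool) (hh : Monotone h) : Monotone (extFun S A f h) := by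
  intro x y hxy
  unfold extFun
  by_cases hx1 : ∃ a : A, f a = true ∧ (a : Cube n) ≤ x.1
  · obtain ⟨a, ha, hle⟩ := hx1
    have hy1 : ∃ a : A, f a = true ∧ (a : Cube n) ≤ y.1 :=
      ⟨a, ha, hle.trans (show x.1 ≤ y.1 from hxy)⟩
    rw [if_pos ⟨a, ha, hle⟩, if_pos hy1]
  · rw [if_neg hx1]
    by_cases hxg : x.1 ∈ genSet A f
    · rw [dif_pos hxg]; exact Bool.false_le _
    · rw [dif_neg hxg]
      by_cases hy1 : ∃ a : A, f a = true ∧ (a : Cube n) ≤ y.1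
      · rw [if_pos hy1]; exact Bool.le_true _
      · rw [if_neg hy1]
        by_cases hyg : y.1 ∈ genSet A f
        · exfalso
          rcases mem_genSet_iff.mp hyg with h1 | ⟨a, ha, hle⟩
          · exact hy1 h1
          · exact hxg (mem_genSet_iff.mpr
              (Or.inr ⟨a, ha, (show x.1 ≤ y.1 from hxy).trans hle⟩))
        · rw [dif_neg hyg]
          exact hh (show (⟨x.1, x.2, hxg⟩ : ↥(S \ genSet A f)) ≤ ⟨y.1, y.2, hyg⟩ from hxy)

lemma extFun_on_A {n : ℕ} (S A : Set (Cube n)) (hAS : A ⊆ S) (f : A → Bool)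
    (hf : Monotone f) (h : ↥(S \ genSet A f) → Bool) (a : A) :
    extFun S A f h ⟨a.1, hAS a.2⟩ = f a := by
  unfold extFun
  by_cases h1 : ∃ a' : A, f a' = true ∧ (a' : Cube n) ≤ a.1
  · rw [if_pos h1]
    obtain ⟨a', ha', hle⟩ := h1
    have := hf (show a' ≤ a from hle)
    rw [ha'] at this
    exact (Bool.eq_true_of_true_le this).symm
  · rw [if_neg h1]
    have ha : f a ≠ true := fun hc => h1 ⟨a, hc, le_refl _⟩
    have hg : a.1 ∈ genSet A f :=
      mem_genSet_iff.mpr (Or.inr ⟨a, by simpa using ha, le_refl _⟩)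
    rw [dif_pos hg]
    simpa using (Bool.eq_false_iff.mpr ha).symm

lemma extFun_off {n : ℕ} (S A : Set (Cube n)) (f : A → Bool)
    (h : ↥(S \ genSet A f) → Bool) (x : ↥(S \ genSet A f)) :
    extFun S A f h ⟨x.1, x.2.1⟩ = h x := by
  unfold extFun
  have hxg : x.1 ∉ genSet A f := x.2.2
  have h1 : ¬ ∃ a : A, f a = true ∧ (a : Cube n) ≤ x.1 := by
    intro hc; exact hxg (mem_genSet_iff.mpr (Or.inl hc))
  rw [if_neg h1, dif_neg hxg]

lemma extFun_restrict {n : ℕ} (S A : Set (Cube n)) (hAS : A ⊆ S) (g : S → Bool)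
    (hg : Monotone g) :
    extFun S A (fun a => g ⟨a.1, hAS a.2⟩)
      (fun x => g ⟨x.1, x.2.1⟩) = g := by
  funext x
  unfold extFun
  set f : A → Bool := fun a => g ⟨a.1, hAS a.2⟩ with hfdef
  by_cases h1 : ∃ a : A, f a = true ∧ (a : Cube n) ≤ x.1
  · rw [if_pos h1]
    obtain ⟨a, ha, hle⟩ := h1
    have := hg (show (⟨a.1, hAS a.2⟩ : S) ≤ x from hle)
    rw [show g ⟨a.1, hAS a.2⟩ = true from ha] at this
    exact (Bool.eq_true_of_true_le this).symm
  · rw [if_neg h1]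
    by_cases hxg : x.1 ∈ genSet A f
    · rw [dif_pos hxg]
      rcases mem_genSet_iff.mp hxg with hc | ⟨a, ha, hle⟩
      · exact absurd hc h1
      · have h2 := hg (show x ≤ (⟨a.1, hAS a.2⟩ : S) from hle)
        rw [show g ⟨a.1, hAS a.2⟩ = false from ha] at h2
        revert h2; cases g x <;> simp
    · rw [dif_neg hxg]

set_option maxHeartbeats 1600000 in
/-- Partition of the local Dedekind number induced by `A ⊆ S`:
`D(S) = Σ_{f ∈ M(A)} D(S \ S_{A,f})`. -/
theorem dedekind_partition {n : ℕ} (hn : 1 ≤ n) (S A : Set (Cube n)) (hAS : A ⊆ S) :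
    localDedekind S =
      ∑ᶠ f : {f : A → Bool // Monotone f}, localDedekind (S \ genSet A f.1) := by
  classical
  set M := {f : A → Bool // Monotone f}
  let φ : {g : S → Bool // Monotone g} → M := fun g =>
    ⟨fun a => g.1 ⟨a.1, hAS a.2⟩,
     fun a b hab => g.2 (show (⟨a.1, hAS a.2⟩ : S) ≤ ⟨b.1, hAS b.2⟩ from hab)⟩
  have key : ∀ f : M,
      Nat.card {g : {g : S → Bool // Monotone g} // φ g = f}
        = localDedekind (S \ genSet A f.1) := by
    intro f
    rw [localDedekind]
    apply Nat.card_congr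
    refine ⟨fun g => ⟨fun x => g.1.1 ⟨x.1, x.2.1⟩,
        fun x y hxy => g.1.2 (show (⟨x.1, x.2.1⟩ : S) ≤ ⟨y.1, y.2.1⟩ from hxy)⟩,
      fun h => ⟨⟨extFun S A f.1 h.1, extFun_monotone S A f.1 h.1 h.2⟩,
        Subtype.ext (funext fun a => extFun_on_A S A hAS f.1 f.2 h.1 a)⟩, ?_, ?_⟩
    · rintro ⟨⟨g, hg⟩, hgf⟩
      subst hgf
      refine Subtype.ext (Subtype.ext ?_)
      exact extFun_restrict S A hAS g hg
    · rintro ⟨h, hh⟩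
      refine Subtype.ext (funext fun x => ?_)
      exact extFun_off S A f.1 h x
  haveI : Fintype M := Fintype.ofFinite _
  haveI : ∀ f : M, Fintype {g : {g : S → Bool // Monotone g} // φ g = f} :=
    fun f => Fintype.ofFinite _
  rw [localDedekind, Nat.card_congr (Equiv.sigmaFiberEquiv φ).symm,
    Nat.card_eq_fintype_card, Fintype.card_sigma, finsum_eq_sum_of_fintype]
  refine Finset.sum_congr rfl fun f _ => ?_
  rw [← key f, Nat.card_eq_fintype_card]
end

section
/- Let n ≥ 1, let S ⊆ E^n, let A ⊆ S, and let f : A → Bool be monotone (with respect to the order induced from E^n). Then the number of monotone functions g : S → Bool whose restriction to A equals f is exactly D(S \ S_{A,f}). -/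
/-- for monotone `f : A → Bool`, the number of monotone `g : S → Bool`
restricting to `f` on `A` is `D(S \ S_{A,f})`. -/
theorem card_extensions_eq {n : ℕ} (hn : 1 ≤ n) (S A : Set (Cube n)) (hAS : A ⊆ S)
    (f : A → Bool) (hf : Monotone f) :
    Nat.card {g : S → Bool //
        Monotone g ∧ ∀ a : A, g (Set.inclusion hAS a) = f a} =
      localDedekind (S \ genSet A f) := by
  classical
  unfold localDedekind
  apply Nat.card_congr
  set G := genSet A f with hGdef
  have memG : ∀ b : Cube n, b ∈ G ↔
      ∃ a : A, (f a = true ∧ a.1 ≤ b) ∨ (f a = false ∧ b ≤ a.1) := by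
    intro b
    simp only [hGdef, genSet, Set.mem_iUnion]
    constructor
    · rintro ⟨a, ha⟩
      by_cases hfa : f a = true
      · rw [if_pos hfa] at ha; exact ⟨a, Or.inl ⟨hfa, ha⟩⟩
      · rw [if_neg hfa] at ha
        exact ⟨a, Or.inr ⟨Bool.not_eq_true _ ▸ hfa, ha⟩⟩
    · rintro ⟨a, (⟨hfa, hle⟩ | ⟨hfa, hle⟩)⟩
      · exact ⟨a, by rw [if_pos hfa]; exact hle⟩
      · refine ⟨a, ?_⟩
        rw [if_neg (by simp [hfa])]; exact hle
  -- the forced value on G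
  let F : Cube n → Bool := fun b => decide (∃ a : A, f a = true ∧ a.1 ≤ b)
  have hFmono : ∀ b c : Cube n, b ≤ c → F b ≤ F c := by
    intro b c hbc
    by_cases hb : ∃ a : A, f a = true ∧ a.1 ≤ b
    · obtain ⟨a, h1, h2⟩ := hb
      have : F c = true := by
        simp only [F, decide_eq_true_eq]; exact ⟨a, h1, h2.trans hbc⟩
      rw [this]; exact le_top
    · have : F b = false := by
        simp only [F, decide_eq_false_iff_not]; exact hb
      rw [this]; exact bot_le
  -- forced lemma: any monotone extension g agrees with F on S ∩ G
  have forced : ∀ g : S → Bool, Monotone g →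
      (∀ a : A, g (Set.inclusion hAS a) = f a) →
      ∀ (b : Cube n) (hbS : b ∈ S), b ∈ G → g ⟨b, hbS⟩ = F b := by
    intro g hg hext b hbS hbG
    rcases (memG b).1 hbG with ⟨a, (⟨hfa, hle⟩ | ⟨hfa, hle⟩)⟩
    · have h1 : g ⟨a.1, hAS a.2⟩ ≤ g ⟨b, hbS⟩ := hg hle
      have h2 : g ⟨a.1, hAS a.2⟩ = true := by
        have := hext a; simpa [Set.inclusion, hfa] using this
      have : g ⟨b, hbS⟩ = true := by
        rw [h2] at h1; exact le_antisymm le_top h1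
      rw [this]; symm
      simp only [F, decide_eq_true_eq]
      exact ⟨a, hfa, hle⟩
    · have h1 : g ⟨b, hbS⟩ ≤ g ⟨a.1, hAS a.2⟩ := hg hle
      have h2 : g ⟨a.1, hAS a.2⟩ = false := by
        have := hext a; simpa [Set.inclusion, hfa] using this
      have h3 : g ⟨b, hbS⟩ = false := by
        rw [h2] at h1; exact le_antisymm h1 bot_le
      rw [h3]; symm
      simp only [F, decide_eq_false_iff_not]
      rintro ⟨a', hfa', hle'⟩
      have : f a' ≤ f a := hf (Subtype.coe_le_coe.mp (le_trans hle' hle))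
      rw [hfa, hfa'] at this
      exact absurd this (by decide)
  refine
    { toFun := fun g => ⟨fun b => g.1 ⟨b.1, b.2.1⟩, fun b c hbc => g.2.1 hbc⟩,
      invFun := fun h => ⟨fun b => if hb : (b : Cube n) ∈ G then F b.1
          else h.1 ⟨b.1, b.2, hb⟩, ?_, ?_⟩,
      left_inv := ?_, right_inv := ?_ }
  · -- monotone
    intro b c hbc
    by_cases hbG : (b : Cube n) ∈ G <;> by_cases hcG : (c : Cube n) ∈ G
    · simp only [dif_pos hbG, dif_pos hcG]
      exact hFmono b.1 c.1 hbc
    · simp only [dif_pos hbG, dif_neg hcG]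
      -- F b must be false
      have : F b.1 = false := by
        simp only [F, decide_eq_false_iff_not]
        rintro ⟨a, hfa, hle⟩
        exact hcG ((memG c.1).2 ⟨a, Or.inl ⟨hfa, le_trans hle hbc⟩⟩)
      rw [this]; exact bot_le
    · simp only [dif_neg hbG, dif_pos hcG]
      have : F c.1 = true := by
        rcases (memG c.1).1 hcG with ⟨a, (⟨hfa, hle⟩ | ⟨hfa, hle⟩)⟩
        · simp only [F, decide_eq_true_eq]; exact ⟨a, hfa, hle⟩
        · exact absurd ((memG b.1).2 ⟨a, Or.inr ⟨hfa, le_trans hbc hle⟩⟩) hbG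
      rw [this]; exact le_top
    · simp only [dif_neg hbG, dif_neg hcG]
      exact h.2 hbc
  · -- extension property
    intro a
    have haG : (a : Cube n) ∈ G := by
      by_cases hfa : f a = true
      · exact (memG a.1).2 ⟨a, Or.inl ⟨hfa, le_rfl⟩⟩
      · exact (memG a.1).2 ⟨a, Or.inr ⟨by simp [hfa], le_rfl⟩⟩
    simp only [Set.inclusion, dif_pos haG]
    by_cases hfa : f a = true
    · rw [hfa]
      simp only [F, decide_eq_true_eq]
      exact ⟨a, hfa, le_rfl⟩
    · have hfa' : f a = false := by simp [hfa]
      rw [hfa']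
      simp only [F, decide_eq_false_iff_not]
      rintro ⟨a', hfa'', hle⟩
      have : f a' ≤ f a := hf hle
      rw [hfa', hfa''] at this
      exact absurd this (by decide)
  · -- left_inv
    intro g
    ext b
    by_cases hbG : (b : Cube n) ∈ G
    · simp only [dif_pos hbG]
      exact (forced g.1 g.2.1 g.2.2 b.1 b.2 hbG).symm
    · simp only [dif_neg hbG]
  · -- right_inv
    intro h
    ext b
    simp only [dif_neg b.2.2]
end

section
/- For every n ≥ 1 and every point a ∈ E^n, the n-th Dedekind number satisfies D_n = D(E^n \ S_{a,1}) + D(E^n \ S_{a,0}), where S_{a,1} = {b ∈ E^n : a ≤ b} and S_{a,0} = {b ∈ E^n : b ≤ a}. -/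
section Aux

variable {n : ℕ} (a : Cube n)

open Classical in
/-- The splitting equivalence according to the value at `a`. -/
noncomputable def splitEquiv :
    {f : ↥(Set.univ : Set (Cube n)) → Bool // Monotone f} ≃
      ({g : ↥((Set.univ : Set (Cube n)) \ upSet a) → Bool // Monotone g} ⊕
      {g : ↥((Set.univ : Set (Cube n)) \ downSet a) → Bool // Monotone g}) where
  toFun f :=
    if f.1 ⟨a, trivial⟩ = true then
      Sum.inl ⟨fun b => f.1 ⟨b.1, trivial⟩, fun b c hbc => f.2 (hbc : b.1 ≤ c.1)⟩
    else
      Sum.inr ⟨fun b => f.1 ⟨b.1, trivial⟩, fun b c hbc => f.2 (hbc : b.1 ≤ c.1)⟩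
  invFun s :=
    match s with
    | Sum.inl g =>
      ⟨fun b => if h : a ≤ b.1 then true else g.1 ⟨b.1, ⟨trivial, h⟩⟩, by
        intro b c hbc
        by_cases hb : a ≤ b.1 <;> by_cases hc : a ≤ c.1
        · simp [hb, hc]
        · exact absurd (hb.trans hbc) hc
        · simp [hb, hc]
        · have h2 : (⟨b.1, ⟨trivial, hb⟩⟩ : ↥((Set.univ : Set (Cube n)) \ upSet a)) ≤
              ⟨c.1, ⟨trivial, hc⟩⟩ := hbc
          simpa [hb, hc] using g.2 h2⟩
    | Sum.inr g =>
      ⟨fun b => if h : b.1 ≤ a then false else g.1 ⟨b.1, ⟨trivial, h⟩⟩, by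
        intro b c hbc
        by_cases hb : b.1 ≤ a <;> by_cases hc : c.1 ≤ a
        · simp [hb, hc]
        · simp [hb, hc]
        · exact absurd (le_trans (show b.1 ≤ c.1 from hbc) hc) hb
        · have h2 : (⟨b.1, ⟨trivial, hb⟩⟩ : ↥((Set.univ : Set (Cube n)) \ downSet a)) ≤
              ⟨c.1, ⟨trivial, hc⟩⟩ := hbc
          simpa [hb, hc] using g.2 h2⟩
  left_inv := by
    rintro ⟨f, hf⟩
    by_cases h : f ⟨a, trivial⟩ = true
    · simp only [h, if_pos]
      apply Subtype.ext
      funext b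
      by_cases hb : a ≤ b.1
      · have h1 : f ⟨a, trivial⟩ ≤ f ⟨b.1, trivial⟩ := hf hb
        rw [h] at h1
        have : f ⟨b.1, trivial⟩ = true := le_antisymm (Bool.le_true _) h1
        simpa [hb] using this.symm
      · simp [hb]
    · simp only [h, if_neg, not_false_iff]
      apply Subtype.ext
      funext b
      have ha : f ⟨a, trivial⟩ = false := by
        cases hfa : f ⟨a, trivial⟩
        · rfl
        · exact absurd hfa h
      by_cases hb : b.1 ≤ a
      · have h1 : f ⟨b.1, trivial⟩ ≤ f ⟨a, trivial⟩ := hf hb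
        rw [ha] at h1
        have : f ⟨b.1, trivial⟩ = false := le_antisymm h1 (Bool.false_le _)
        simpa [hb] using this.symm
      · simp [hb]
  right_inv := by
    rintro (⟨g, hg⟩ | ⟨g, hg⟩)
    · have ha : (if h : a ≤ a then true else g ⟨a, ⟨trivial, h⟩⟩) = true := by
        simp
      simp only [ha, if_pos]
      apply congrArg Sum.inl
      apply Subtype.ext
      funext b
      have hb : ¬ a ≤ b.1 := b.2.2
      simp [hb]
    · have ha : (if h : a ≤ a then false else g ⟨a, ⟨trivial, h⟩⟩) = false := by
        simp
      simp only [ha, Bool.false_eq_true, if_neg, not_false_iff]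
      apply congrArg Sum.inr
      apply Subtype.ext
      funext b
      have hb : ¬ b.1 ≤ a := b.2.2
      simp [hb]
end Aux

/-- `D_n = D(E^n \ S_{a,1}) + D(E^n \ S_{a,0})` for any `a ∈ E^n`. -/
theorem dedekind_eq_add {n : ℕ} (hn : 1 ≤ n) (a : Cube n) :
    dedekind n =
      localDedekind ((Set.univ : Set (Cube n)) \ upSet a) +
        localDedekind ((Set.univ : Set (Cube n)) \ downSet a) := by
  classical
  rw [dedekind, localDedekind, localDedekind, localDedekind,
    Nat.card_congr (splitEquiv a), Nat.card_sum]
end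

section
/- Let n ≥ 3, and let A = {a ∈ E^n : |a| is even} and B = {a ∈ E^n : |a| is odd}. Then each of A and B completely partitions E^n, and neither A nor B contains a subset which is a V_3 (so by minimality of V_3-free complete partitions, A and B are minimal complete partition subsets of E^n). -/
lemma dedekind_zero : dedekind 0 = 2 := by
  show localDedekind (Set.univ : Set (Cube 0)) = 2
  set S : Set (Cube 0) := Set.univ with hS
  unfold localDedekind
  have hall : ∀ f : S → Bool, Monotone f := by
    intro f x y _
    have : x = y := Subtype.ext (funext fun i => i.elim0)
    exact le_of_eq (congrArg f this)
  calc Nat.card {f : S → Bool // Monotone f}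
      = Nat.card (S → Bool) := Nat.card_congr (Equiv.subtypeUnivEquiv hall)
    _ = 2 := by
        rw [Nat.card_fun]
        simp [Nat.card_eq_fintype_card, hS]

lemma localDedekind_antichain {n : ℕ} (S : Set (Cube n))
    (h : ∀ x ∈ S, ∀ y ∈ S, x ≤ y → x = y) :
    localDedekind S = ((List.replicate (Nat.card S) 0).map dedekind).prod := by
  rw [List.map_replicate, dedekind_zero, List.prod_replicate]
  unfold localDedekind
  have hall : ∀ f : S → Bool, Monotone f := by
    intro f x y hxy
    have : x = y := Subtype.ext (h x.1 x.2 y.1 y.2 hxy)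
    exact le_of_eq (congrArg f this)
  calc Nat.card {f : S → Bool // Monotone f}
      = Nat.card (S → Bool) := Nat.card_congr (Equiv.subtypeUnivEquiv hall)
    _ = 2 ^ Nat.card S := by rw [Nat.card_fun]; simp

lemma weight_update {n : ℕ} (x : Cube n) (i : Fin n) (hx : x i = false) :
    weight (Function.update x i true) = weight x + 1 := by
  unfold weight
  have hset : (Finset.univ.filter fun j => Function.update x i true j = true)
      = insert i (Finset.univ.filter fun j => x j = true) := by
    ext j
    by_cases h : j = i <;> simp [Function.update_apply, h, hx]
  rw [hset, Finset.card_insert_of_notMem (by simp [hx])]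

lemma compl_antichain {n : ℕ} (P : ℕ → Prop) (hP : ∀ m, P m ∨ P (m + 1))
    (f : {a : Cube n | P (weight a)} → Bool) :
    ∀ x ∈ Set.univ \ genSet {a : Cube n | P (weight a)} f,
      ∀ y ∈ Set.univ \ genSet {a : Cube n | P (weight a)} f, x ≤ y → x = y := by
  intro x hx y hy hxy
  by_contra hne
  -- key: any a with P (weight a), x ≤ a, a ≤ y gives a contradiction
  have key : ∀ a : Cube n, P (weight a) → x ≤ a → a ≤ y → False := by
    intro a ha hxa hay
    set a' : {a : Cube n | P (weight a)} := ⟨a, ha⟩ with ha'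
    cases hf : f a' with
    | true =>
        exact hy.2 (Set.mem_iUnion.2 ⟨a', by simp [hf, upSet]; exact hay⟩)
    | false =>
        exact hx.2 (Set.mem_iUnion.2 ⟨a', by simp [hf, downSet]; exact hxa⟩)
  rcases hP (weight x) with h | h
  · exact key x h le_rfl hxy
  · obtain ⟨i, hi⟩ := Function.ne_iff.mp hne
    have hxi : x i = false := by
      cases h1 : x i
      · rfl
      · have := hxy i
        rw [h1] at this
        cases h2 : y i
        · rw [h2] at this; exact absurd this (by simp)
        · exact absurd (h1.trans h2.symm) hi
    have hyi : y i = true := by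
      cases h2 : y i
      · exact absurd (hxi.trans h2.symm) hi
      · rfl
    refine key (Function.update x i true) ?_ ?_ ?_
    · rw [weight_update x i hxi]; exact h
    · intro j
      by_cases hj : j = i
      · subst hj; rw [hxi, Function.update_self]; exact Bool.false_le _
      · rw [Function.update_of_ne hj]
    · intro j
      by_cases hj : j = i
      · subst hj; rw [Function.update_self, hyi]
      · rw [Function.update_of_ne hj]; exact hxy j

/-- for `n ≥ 3`, the even-weight points and the odd-weight points each
form a `V₃`-free complete partition subset of `E^n`. -/
theorem parity_completePartition {n : ℕ} (hn : 3 ≤ n) :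
    completelyPartitions {a : Cube n | Even (weight a)} (Set.univ : Set (Cube n)) ∧
    completelyPartitions {a : Cube n | Odd (weight a)} (Set.univ : Set (Cube n)) ∧
    (¬ ∃ T ⊆ {a : Cube n | Even (weight a)}, isV3 T) ∧
    (¬ ∃ T ⊆ {a : Cube n | Odd (weight a)}, isV3 T) := by
  refine ⟨?_, ?_, ?_, ?_⟩
  · intro f _
    exact ⟨List.replicate (Nat.card ↥(Set.univ \ genSet {a : Cube n | Even (weight a)} f)) 0,
      localDedekind_antichain _ (compl_antichain Even
        (fun m => (Nat.even_or_odd m).imp id Odd.add_one) f)⟩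
  · intro f _
    exact ⟨List.replicate (Nat.card ↥(Set.univ \ genSet {a : Cube n | Odd (weight a)} f)) 0,
      localDedekind_antichain _ (compl_antichain Odd
        (fun m => (Nat.even_or_odd m).symm.imp id Even.add_one) f)⟩
  · rintro ⟨T, hT, v, a, b, -, hTeq, hcov⟩
    have hv : Even (weight v) := hT (hTeq ▸ (by simp : v ∈ ({v, a, b} : Set (Cube n))))
    have ha : Even (weight a) := hT (hTeq ▸ (by simp : a ∈ ({v, a, b} : Set (Cube n))))
    rcases hcov with ⟨⟨-, hw⟩, -⟩ | ⟨⟨-, hw⟩, -⟩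
    · rw [hw] at ha; exact (Nat.even_add_one.mp ha) hv
    · rw [hw] at hv; exact (Nat.even_add_one.mp hv) ha
  · rintro ⟨T, hT, v, a, b, -, hTeq, hcov⟩
    have hv : Odd (weight v) := hT (hTeq ▸ (by simp : v ∈ ({v, a, b} : Set (Cube n))))
    have ha : Odd (weight a) := hT (hTeq ▸ (by simp : a ∈ ({v, a, b} : Set (Cube n))))
    rcases hcov with ⟨⟨-, hw⟩, -⟩ | ⟨⟨-, hw⟩, -⟩
    · rw [hw] at ha; exact (Nat.odd_add_one.mp ha) hv
    · rw [hw] at hv; exact (Nat.odd_add_one.mp hv) ha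
end
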